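/- arXiv:0903.5065 — 2 statements merged into one kernel-verified Lean document; each statement's English description precedes it below -/
import Mathlib

section
/- With the Koszul bracket on 1-forms of a Poisson algebra A and anchor map π^♯: Ω¹_A → Der(A) determined by π^♯(df) = X_f, the anchor is a Lie algebra homomorphism: π^♯([α, β]) = [π^♯(α), π^♯(β)] for all 1-forms α, β. -/
/-!
Both sides are biadditive in `(α, β)` and `Ω[A⁄K]` is additively generated by the forms
`f • D g`, so it suffices to compare them on pairs of such forms. There the identity is
`[f₁ X₁, f₂ X₂] = f₁ X₁(f₂) X₂ - f₂ X₂(f₁) X₁ + f₁ f₂ [X₁, X₂]` for the derivations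
`Xᵢ = {gᵢ, ·}`, together with `[X_{g₁}, X_{g₂}] = X_{{g₁, g₂}}`, which is the Jacobi identity.
-/

namespace KaehlerDifferential

variable {R S : Type*} [CommRing R] [CommRing S] [Algebra R S]

theorem addMonoidHom_ext {M : Type*} [AddZeroClass M] {φ ψ : Ω[S⁄R] →+ M}
    (h : ∀ f g : S, φ (f • D R S g) = ψ (f • D R S g)) : φ = ψ := by
  ext ω
  have hω : ω ∈ Submodule.span S (Set.range (D R S)) := by
    rw [span_range_derivation]
    exact Submodule.mem_top
  induction hω using Submodule.closure_induction with
  | zero => simp only [map_zero]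
  | add x y _ _ hx hy => rw [map_add, map_add, hx, hy]
  | smul_mem f _ hg =>
    obtain ⟨g, rfl⟩ := hg
    exact h f g

theorem addMonoidHom_ext₂ {M : Type*} [AddCommMonoid M] {φ ψ : Ω[S⁄R] →+ Ω[S⁄R] →+ M}
    (h : ∀ f₁ g₁ f₂ g₂ : S,
      φ (f₁ • D R S g₁) (f₂ • D R S g₂) = ψ (f₁ • D R S g₁) (f₂ • D R S g₂)) : φ = ψ :=
  addMonoidHom_ext fun f₁ g₁ => addMonoidHom_ext (h f₁ g₁)

end KaehlerDifferential

def AddMonoid.End.commutator (A : Type*) [AddCommGroup A] :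
    AddMonoid.End A →+ AddMonoid.End A →+ AddMonoid.End A :=
  AddMonoidHom.mul - AddMonoidHom.mul.flip

theorem commutator_mul_mul_of_leibniz {A : Type*} [CommRing A] {X Y Z : A → A}
    (hX : ∀ b c, X (b * c) = X b * c + b * X c) (hY : ∀ b c, Y (b * c) = Y b * c + b * Y c)
    (hXY : ∀ a, X (Y a) = Z a + Y (X a)) (f g a : A) :
    f * X (g * Y a) - g * Y (f * X a) = f * X g * Y a - g * Y f * X a + f * g * Z a := by
  rw [hX, hY, hXY]
  ring

theorem koszul_bracket_anchor_is_lie_hom_general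
    (K : Type*) [Field K] (A : Type*) [CommRing A] [Algebra K A]
    -- the Poisson bracket:
    (P : A →ₗ[K] A →ₗ[K] A)
    (P_jacobi : ∀ a b c : A, P a (P b c) = P (P a b) c + P b (P a c))
    (P_leibniz : ∀ a b c : A, P a (b * c) = P a b * c + b * P a c)
    -- the Koszul bracket on Kähler 1-forms, with its defining formula on generators:
    (br : KaehlerDifferential K A →+ KaehlerDifferential K A →+ KaehlerDifferential K A)
    (hbr : ∀ f₁ g₁ f₂ g₂ : A,
      br (f₁ • KaehlerDifferential.D K A g₁) (f₂ • KaehlerDifferential.D K A g₂)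
        = (f₁ * P g₁ f₂) • KaehlerDifferential.D K A g₂
          - (f₂ * P g₂ f₁) • KaehlerDifferential.D K A g₁
          + (f₁ * f₂) • KaehlerDifferential.D K A (P g₁ g₂))
    -- the anchor `π^♯`, an additive map to endomorphisms of `A` (derivations), with
    -- `π^♯(f dg) = f X_g`:
    (ρ : KaehlerDifferential K A →+ (A →+ A))
    (hρ : ∀ f g a : A, ρ (f • KaehlerDifferential.D K A g) a = f * P g a) :
    -- the anchor is a homomorphism to the commutator bracket on derivations:
    ∀ α β : KaehlerDifferential K A,
      ρ (br α β) = (ρ α).comp (ρ β) - (ρ β).comp (ρ α) := by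
  have on_generators : ∀ f₁ g₁ f₂ g₂ : A,
      ρ (br (f₁ • KaehlerDifferential.D K A g₁) (f₂ • KaehlerDifferential.D K A g₂))
        = (ρ (f₁ • KaehlerDifferential.D K A g₁)).comp (ρ (f₂ • KaehlerDifferential.D K A g₂))
          - (ρ (f₂ • KaehlerDifferential.D K A g₂)).comp (ρ (f₁ • KaehlerDifferential.D K A g₁)) := by
    intro f₁ g₁ f₂ g₂
    ext a
    simp only [hbr, map_add, map_sub, AddMonoidHom.add_apply, AddMonoidHom.sub_apply,
      AddMonoidHom.comp_apply, hρ]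
    exact (commutator_mul_mul_of_leibniz (P_leibniz g₁) (P_leibniz g₂) (P_jacobi g₁ g₂)
      f₁ f₂ a).symm
  have biadditive_eq : br.compr₂ ρ = ((AddMonoid.End.commutator A).compl₂ ρ).comp ρ :=
    KaehlerDifferential.addMonoidHom_ext₂ on_generators
  intro α β
  exact congr($biadditive_eq α β)

theorem koszul_bracket_anchor_is_lie_hom
    (K : Type*) [Field K] [CharZero K] (A : Type*) [CommRing A] [Algebra K A]
    -- the Poisson bracket:
    (P : A →ₗ[K] A →ₗ[K] A)
    (P_antisymm : ∀ a b : A, P a b = - P b a)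
    (P_jacobi : ∀ a b c : A, P a (P b c) = P (P a b) c + P b (P a c))
    (P_leibniz : ∀ a b c : A, P a (b * c) = P a b * c + b * P a c)
    -- the Koszul bracket on Kähler 1-forms, with its defining formula on generators:
    (br : KaehlerDifferential K A →+ KaehlerDifferential K A →+ KaehlerDifferential K A)
    (hbr : ∀ f₁ g₁ f₂ g₂ : A,
      br (f₁ • KaehlerDifferential.D K A g₁) (f₂ • KaehlerDifferential.D K A g₂)
        = (f₁ * P g₁ f₂) • KaehlerDifferential.D K A g₂
          - (f₂ * P g₂ f₁) • KaehlerDifferential.D K A g₁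
          + (f₁ * f₂) • KaehlerDifferential.D K A (P g₁ g₂))
    -- the anchor `π^♯`, an additive map to endomorphisms of `A` (derivations), with
    -- `π^♯(f dg) = f X_g`:
    (ρ : KaehlerDifferential K A →+ (A →+ A))
    (hρ : ∀ f g a : A, ρ (f • KaehlerDifferential.D K A g) a = f * P g a) :
    -- the anchor is a homomorphism to the commutator bracket on derivations:
    ∀ α β : KaehlerDifferential K A,
      ρ (br α β) = (ρ α).comp (ρ β) - (ρ β).comp (ρ α) :=
  koszul_bracket_anchor_is_lie_hom_general K A P P_jacobi P_leibniz br hbr ρ hρ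
end

section
/- The anchor-Leibniz rule holds for the Koszul bracket: for 1-forms α, β of a Poisson algebra A and f ∈ A, [α, f β] = (π^♯(α) f) β + f [α, β]. -/
/-!
Both sides of the anchor-Leibniz rule are additive in `α` and in `β`, and Kähler 1-forms are
sums of `a • d b`, so it suffices to check the rule on `α = a • d b`, `β = c • d g`. There it is
the defining formula of the bracket together with the Leibniz rule
`{b, f c} = {b, f} c + f {b, c}`.
-/

open KaehlerDifferential

@[elab_as_elim]
theorem KaehlerDifferential.induction_smul_D {R S : Type*} [CommRing R] [CommRing S]
    [Algebra R S] {p : Ω[S⁄R] → Prop} (zero : p 0) (add : ∀ x y, p x → p y → p (x + y))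
    (smul_D : ∀ a b : S, p (a • D R S b)) (ω : Ω[S⁄R]) : p ω := by
  obtain ⟨c, rfl⟩ := linearCombination_surjective R S ω
  induction c using Finsupp.induction_linear with
  | zero => simpa using zero
  | add c₁ c₂ h₁ h₂ => simpa only [map_add] using add _ _ h₁ h₂
  | single b a => simpa only [Finsupp.linearCombination_single] using smul_D a b

theorem koszul_bracket_anchor_leibniz_general
    (K : Type*) [Field K] (A : Type*) [CommRing A] [Algebra K A]
    -- the Poisson bracket:
    (P : A →ₗ[K] A →ₗ[K] A)
    (P_leibniz : ∀ a b c : A, P a (b * c) = P a b * c + b * P a c)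
    -- the Koszul bracket on Kähler 1-forms, with its defining formula on generators:
    (br : KaehlerDifferential K A →+ KaehlerDifferential K A →+ KaehlerDifferential K A)
    (hbr : ∀ f₁ g₁ f₂ g₂ : A,
      br (f₁ • KaehlerDifferential.D K A g₁) (f₂ • KaehlerDifferential.D K A g₂)
        = (f₁ * P g₁ f₂) • KaehlerDifferential.D K A g₂
          - (f₂ * P g₂ f₁) • KaehlerDifferential.D K A g₁
          + (f₁ * f₂) • KaehlerDifferential.D K A (P g₁ g₂))
    -- the anchor `π^♯` with `π^♯(f dg) = f X_g`:
    (ρ : KaehlerDifferential K A →+ (A →+ A))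
    (hρ : ∀ f g a : A, ρ (f • KaehlerDifferential.D K A g) a = f * P g a) :
    -- the anchor-Leibniz rule:
    ∀ (α β : KaehlerDifferential K A) (f : A),
      br α (f • β) = (ρ α f) • β + f • br α β := by
  intro α β f
  induction α using KaehlerDifferential.induction_smul_D with
  | zero => simp
  | add α₁ α₂ h₁ h₂ =>
    simp only [map_add, AddMonoidHom.add_apply, h₁, h₂, add_smul, smul_add]
    abel
  | smul_D a b =>
    induction β using KaehlerDifferential.induction_smul_D with
    | zero => simp
    | add β₁ β₂ h₁ h₂ =>
      simp only [smul_add, map_add, h₁, h₂]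
      abel
    | smul_D c g =>
      rw [smul_smul, hbr, hbr, hρ, P_leibniz]
      module

theorem koszul_bracket_anchor_leibniz
    (K : Type*) [Field K] [CharZero K] (A : Type*) [CommRing A] [Algebra K A]
    -- the Poisson bracket:
    (P : A →ₗ[K] A →ₗ[K] A)
    (P_antisymm : ∀ a b : A, P a b = - P b a)
    (P_jacobi : ∀ a b c : A, P a (P b c) = P (P a b) c + P b (P a c))
    (P_leibniz : ∀ a b c : A, P a (b * c) = P a b * c + b * P a c)
    -- the Koszul bracket on Kähler 1-forms, with its defining formula on generators:
    (br : KaehlerDifferential K A →+ KaehlerDifferential K A →+ KaehlerDifferential K A)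
    (hbr : ∀ f₁ g₁ f₂ g₂ : A,
      br (f₁ • KaehlerDifferential.D K A g₁) (f₂ • KaehlerDifferential.D K A g₂)
        = (f₁ * P g₁ f₂) • KaehlerDifferential.D K A g₂
          - (f₂ * P g₂ f₁) • KaehlerDifferential.D K A g₁
          + (f₁ * f₂) • KaehlerDifferential.D K A (P g₁ g₂))
    -- the anchor `π^♯` with `π^♯(f dg) = f X_g`:
    (ρ : KaehlerDifferential K A →+ (A →+ A))
    (hρ : ∀ f g a : A, ρ (f • KaehlerDifferential.D K A g) a = f * P g a) :
    -- the anchor-Leibniz rule: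
    ∀ (α β : KaehlerDifferential K A) (f : A),
      br α (f • β) = (ρ α f) • β + f • br α β :=
  koszul_bracket_anchor_leibniz_general K A P P_leibniz br hbr ρ hρ
end
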